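/- Let D ≥ 1 be an integer, E = ℂ^D, and let R_B ⊂ E^{⊗3} be the linear span of {[[x,y]_⊗, z]_⊗ : x, y, z ∈ E}. Then inside E^{⊗5} one has (R_B⊗E⊗E) ∩ (E⊗R_B⊗E) ∩ (E⊗E⊗R_B) = 0; equivalently, the degree-5 homogeneous component of the dual cubic algebra B^! vanishes (and hence all components of degree ≥ 5 vanish). -/

import Mathlib

/-!
In coordinates, every generator `[[x,y]_⊗,z]_⊗` of `R_B`, hence every `r ∈ R_B`, satisfies
`2 r_{abc} + r_{bac} + r_{bca} - r_{cba} = 0`. A tensor `t` in the triple intersection therefore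
satisfies this identity in the index slots `123`, `234` and `345`, and an explicit rational
linear combination of these identities (22 of them) isolates each single coordinate
`t_{abcde}`, which must vanish.
-/

set_option maxSynthPendingDepth 5

open TensorProduct

/-- The relation space `R_B ⊂ (ℂ^D)^{⊗3}` of the parafermionic algebra: the linear span of the
elements `[[x,y]_⊗, z]_⊗ = x⊗y⊗z - y⊗x⊗z - z⊗x⊗y + z⊗y⊗x` for `x, y, z ∈ ℂ^D`. -/
noncomputable def parafermionicRelations (D : ℕ) :
    Submodule ℂ ((Fin D → ℂ) ⊗[ℂ] ((Fin D → ℂ) ⊗[ℂ] (Fin D → ℂ))) :=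
  Submodule.span ℂ
    {t | ∃ x y z : Fin D → ℂ,
      t = x ⊗ₜ[ℂ] (y ⊗ₜ[ℂ] z) - y ⊗ₜ[ℂ] (x ⊗ₜ[ℂ] z)
          - z ⊗ₜ[ℂ] (x ⊗ₜ[ℂ] y) + z ⊗ₜ[ℂ] (y ⊗ₜ[ℂ] x)}

section Embeddings

variable (E : Type*) [AddCommGroup E] [Module ℂ E]

/-- Reassociation `E^{⊗3} ⊗ E^{⊗2} ≃ E^{⊗5}`. -/
noncomputable def assocFive :
    ((E ⊗[ℂ] (E ⊗[ℂ] E)) ⊗[ℂ] (E ⊗[ℂ] E)) ≃ₗ[ℂ]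
      E ⊗[ℂ] (E ⊗[ℂ] (E ⊗[ℂ] (E ⊗[ℂ] E))) :=
  (TensorProduct.assoc ℂ E (E ⊗[ℂ] E) (E ⊗[ℂ] E)).trans
    (TensorProduct.congr (LinearEquiv.refl ℂ E) (TensorProduct.assoc ℂ E E (E ⊗[ℂ] E)))

/-- Reassociation `E^{⊗3} ⊗ E ≃ E^{⊗4}`. -/
noncomputable def assocFour :
    ((E ⊗[ℂ] (E ⊗[ℂ] E)) ⊗[ℂ] E) ≃ₗ[ℂ] E ⊗[ℂ] (E ⊗[ℂ] (E ⊗[ℂ] E)) :=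
  (TensorProduct.assoc ℂ E (E ⊗[ℂ] E) E).trans
    (TensorProduct.congr (LinearEquiv.refl ℂ E) (TensorProduct.assoc ℂ E E E))

variable {E}

/-- The subspace `R ⊗ E ⊗ E` of `E^{⊗5}` determined by a subspace `R ⊆ E^{⊗3}`. -/
noncomputable def subREE (R : Submodule ℂ (E ⊗[ℂ] (E ⊗[ℂ] E))) :
    Submodule ℂ (E ⊗[ℂ] (E ⊗[ℂ] (E ⊗[ℂ] (E ⊗[ℂ] E)))) :=
  Submodule.map (assocFive E).toLinearMap
    (LinearMap.range (TensorProduct.map R.subtype (LinearMap.id (M := E ⊗[ℂ] E))))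

/-- The subspace `R ⊗ E` of `E^{⊗4}` determined by a subspace `R ⊆ E^{⊗3}`. -/
noncomputable def subRE (R : Submodule ℂ (E ⊗[ℂ] (E ⊗[ℂ] E))) :
    Submodule ℂ (E ⊗[ℂ] (E ⊗[ℂ] (E ⊗[ℂ] E))) :=
  Submodule.map (assocFour E).toLinearMap
    (LinearMap.range (TensorProduct.map R.subtype (LinearMap.id (M := E))))

/-- The subspace `E ⊗ p` of `E ⊗ M` determined by a subspace `p ⊆ M`. -/
noncomputable def subEl {M : Type*} [AddCommMonoid M] [Module ℂ M] (p : Submodule ℂ M) :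
    Submodule ℂ (E ⊗[ℂ] M) :=
  LinearMap.range (p.subtype.lTensor E)

/-- The subspace `E ⊗ R ⊗ E` of `E^{⊗5}`. -/
noncomputable def subERE (R : Submodule ℂ (E ⊗[ℂ] (E ⊗[ℂ] E))) :
    Submodule ℂ (E ⊗[ℂ] (E ⊗[ℂ] (E ⊗[ℂ] (E ⊗[ℂ] E)))) :=
  subEl (subRE R)

/-- The subspace `E ⊗ E ⊗ R` of `E^{⊗5}`. -/
noncomputable def subEER (R : Submodule ℂ (E ⊗[ℂ] (E ⊗[ℂ] E))) :
    Submodule ℂ (E ⊗[ℂ] (E ⊗[ℂ] (E ⊗[ℂ] (E ⊗[ℂ] E)))) :=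
  subEl (subEl R)

end Embeddings

def ParafermionicIdentity {K ι : Type*} [Ring K] (f : ι → ι → ι → K) : Prop :=
  ∀ a b c, 2 * f a b c + f b a c + f b c a - f c b a = 0

-- coefficients obtained by solving the linear system over ℚ
theorem eq_zero_of_parafermionicIdentity {K ι : Type*} [Field K] [CharZero K]
    (f : ι → ι → ι → ι → ι → K)
    (h₁ : ∀ d e, ParafermionicIdentity fun a b c => f a b c d e)
    (h₂ : ∀ a e, ParafermionicIdentity fun b c d => f a b c d e)
    (h₃ : ∀ a b, ParafermionicIdentity fun c d e => f a b c d e) (a b c d e : ι) :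
    f a b c d e = 0 := by
  linear_combination (2/9 : K) * h₁ e d a b c
    + (-1/9 : K) * h₁ e c a b d
    + (1/9 : K) * h₁ d c a b e
    + (1/9 : K) * h₁ c d a b e
    + (2/9 : K) * h₁ e d a c b
    + (-1/9 : K) * h₁ e c a d b
    + (1/9 : K) * h₁ d c a e b
    + (1/9 : K) * h₁ c d a e b
    + (2/9 : K) * h₁ e d b a c
    + (-1/9 : K) * h₁ e c b a d
    + (1/9 : K) * h₁ d c b a e
    + (1/9 : K) * h₁ c d b a e
    + (-4/9 : K) * h₂ a d b c e
    + (-1/9 : K) * h₂ a c b d e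
    + (-4/9 : K) * h₂ a d b e c
    + (-1/9 : K) * h₂ a c b e d
    + (-1/9 : K) * h₂ a d c b e
    + (2/9 : K) * h₂ a c d b e
    + (2/3 : K) * h₃ a b c d e
    + (1/3 : K) * h₃ a b c e d
    + (-1/3 : K) * h₃ a b d c e
    + (-1/3 : K) * h₃ b a c e d

section Coordinates

variable {ι E M κ : Type*} [AddCommGroup E] [Module ℂ E] [AddCommGroup M] [Module ℂ M]
  (b : Module.Basis ι ℂ E)

noncomputable def tensorBasis3 : Module.Basis (ι × ι × ι) ℂ (E ⊗[ℂ] (E ⊗[ℂ] E)) :=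
  b.tensorProduct (b.tensorProduct b)

noncomputable def tensorBasis4 : Module.Basis (ι × ι × ι × ι) ℂ (E ⊗[ℂ] (E ⊗[ℂ] (E ⊗[ℂ] E))) :=
  b.tensorProduct (tensorBasis3 b)

noncomputable def tensorBasis5 :
    Module.Basis (ι × ι × ι × ι × ι) ℂ (E ⊗[ℂ] (E ⊗[ℂ] (E ⊗[ℂ] (E ⊗[ℂ] E)))) :=
  b.tensorProduct (tensorBasis4 b)

-- `assocFive E` and `assocFour E` are `tensorReassoc E (E ⊗ E)` and `tensorReassoc E E`
-- by definition.
noncomputable def tensorReassoc (E M : Type*) [AddCommGroup E] [Module ℂ E] [AddCommGroup M]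
    [Module ℂ M] :
    (E ⊗[ℂ] (E ⊗[ℂ] E)) ⊗[ℂ] M ≃ₗ[ℂ] E ⊗[ℂ] (E ⊗[ℂ] (E ⊗[ℂ] M)) :=
  (TensorProduct.assoc ℂ E (E ⊗[ℂ] E) M).trans
    (TensorProduct.congr (LinearEquiv.refl ℂ E) (TensorProduct.assoc ℂ E E M))

theorem repr_tensorReassoc (β : Module.Basis κ ℂ M) (u : (E ⊗[ℂ] (E ⊗[ℂ] E)) ⊗[ℂ] M)
    (i j k : ι) (m : κ) :
    (b.tensorProduct (b.tensorProduct (b.tensorProduct β))).repr (tensorReassoc E M u)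
        (i, j, k, m) =
      ((tensorBasis3 b).tensorProduct β).repr u ((i, j, k), m) := by
  have h : Finsupp.lapply (i, j, k, m) ∘ₗ
        (b.tensorProduct (b.tensorProduct (b.tensorProduct β))).repr.toLinearMap ∘ₗ
        (tensorReassoc E M).toLinearMap =
      Finsupp.lapply ((i, j, k), m) ∘ₗ ((tensorBasis3 b).tensorProduct β).repr.toLinearMap := by
    refine ((tensorBasis3 b).tensorProduct β).ext fun ⟨⟨i', j', k'⟩, m'⟩ => ?_
    simp only [LinearMap.coe_comp, Function.comp_apply, LinearEquiv.coe_coe,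
      Finsupp.lapply_apply, Module.Basis.tensorProduct_apply, Module.Basis.repr_self,
      tensorBasis3, tensorReassoc, LinearEquiv.trans_apply, TensorProduct.assoc_tmul,
      TensorProduct.congr_tmul, LinearEquiv.refl_apply,
      Module.Basis.tensorProduct_repr_tmul_apply, smul_eq_mul]
    ring
  exact LinearMap.congr_fun h u

variable {b}

theorem parafermionicIdentity_repr_tensorReassoc {R : Submodule ℂ (E ⊗[ℂ] (E ⊗[ℂ] E))}
    (hR : ∀ r ∈ R, ParafermionicIdentity fun i j k => (tensorBasis3 b).repr r (i, j, k))
    (β : Module.Basis κ ℂ M) {u : (E ⊗[ℂ] (E ⊗[ℂ] E)) ⊗[ℂ] M}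
    (hu : u ∈ LinearMap.range (TensorProduct.map R.subtype (LinearMap.id (M := M)))) (m : κ) :
    ParafermionicIdentity fun i j k =>
      (b.tensorProduct (b.tensorProduct (b.tensorProduct β))).repr (tensorReassoc E M u)
        (i, j, k, m) := by
  intro i j k
  simp only [repr_tensorReassoc]
  obtain ⟨v, rfl⟩ := hu
  induction v using TensorProduct.induction_on with
  | zero => simp
  | tmul r x =>
    simp only [TensorProduct.map_tmul, Module.Basis.tensorProduct_repr_tmul_apply,
      Submodule.coe_subtype, LinearMap.id_coe, id_eq, smul_eq_mul]
    linear_combination β.repr x m * hR r r.2 i j k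
  | add v w hv hw =>
    simp only [map_add, Finsupp.add_apply]
    linear_combination hv + hw

section Contraction

variable {N : Type*} [AddCommGroup N] [Module ℂ N]

noncomputable def leftContract (φ : N →ₗ[ℂ] ℂ) : N ⊗[ℂ] M →ₗ[ℂ] M :=
  (TensorProduct.lid ℂ M).toLinearMap ∘ₗ φ.rTensor M

@[simp]
theorem leftContract_tmul (φ : N →ₗ[ℂ] ℂ) (x : N) (y : M) :
    leftContract φ (x ⊗ₜ y) = φ x • y := by
  simp [leftContract]

theorem leftContract_mem_of_mem_subEl {p : Submodule ℂ M} (φ : N →ₗ[ℂ] ℂ) {t : N ⊗[ℂ] M}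
    (ht : t ∈ subEl p) : leftContract φ t ∈ p := by
  obtain ⟨u, rfl⟩ := ht
  induction u using TensorProduct.induction_on with
  | zero => simp
  | tmul x y =>
    rw [LinearMap.lTensor_tmul, leftContract_tmul]
    exact p.smul_mem _ y.2
  | add u v hu hv => simpa only [map_add] using p.add_mem hu hv

end Contraction

theorem repr_leftContract_coord (β : Module.Basis κ ℂ M) (i : ι) (t : E ⊗[ℂ] M) (m : κ) :
    β.repr (leftContract (b.coord i) t) m = (b.tensorProduct β).repr t (i, m) := by
  induction t using TensorProduct.induction_on with
  | zero => simp
  | tmul x y =>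
    simp only [leftContract_tmul, map_smul, Finsupp.smul_apply, smul_eq_mul,
      Module.Basis.coord_apply, Module.Basis.tensorProduct_repr_tmul_apply]
    ring
  | add u v hu hv => simp only [map_add, Finsupp.add_apply, hu, hv]

variable {R : Submodule ℂ (E ⊗[ℂ] (E ⊗[ℂ] E))}
  (hR : ∀ r ∈ R, ParafermionicIdentity fun i j k => (tensorBasis3 b).repr r (i, j, k))
include hR

theorem parafermionicIdentity_of_mem_subREE {t} (ht : t ∈ subREE R) (l m : ι) :
    ParafermionicIdentity fun i j k => (tensorBasis5 b).repr t (i, j, k, l, m) := by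
  obtain ⟨u, hu, rfl⟩ := ht
  exact parafermionicIdentity_repr_tensorReassoc hR (b.tensorProduct b) hu (l, m)

theorem parafermionicIdentity_of_mem_subRE {t} (ht : t ∈ subRE R) (l : ι) :
    ParafermionicIdentity fun i j k => (tensorBasis4 b).repr t (i, j, k, l) := by
  obtain ⟨u, hu, rfl⟩ := ht
  exact parafermionicIdentity_repr_tensorReassoc hR b hu l

theorem parafermionicIdentity_of_mem_subERE {t} (ht : t ∈ subERE R) (h m : ι) :
    ParafermionicIdentity fun i j k => (tensorBasis5 b).repr t (h, i, j, k, m) := by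
  have := parafermionicIdentity_of_mem_subRE hR
    (leftContract_mem_of_mem_subEl (b.coord h) ht) m
  simp only [ParafermionicIdentity, repr_leftContract_coord] at this
  exact this

theorem parafermionicIdentity_of_mem_subEER {t} (ht : t ∈ subEER R) (g h : ι) :
    ParafermionicIdentity fun i j k => (tensorBasis5 b).repr t (g, h, i, j, k) := by
  have := hR _ (leftContract_mem_of_mem_subEl (b.coord h)
    (leftContract_mem_of_mem_subEl (b.coord g) ht))
  simp only [ParafermionicIdentity, repr_leftContract_coord] at this
  exact this

theorem subREE_inf_subERE_inf_subEER_eq_bot : subREE R ⊓ subERE R ⊓ subEER R = ⊥ := by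
  rw [eq_bot_iff]
  rintro t ⟨⟨h₁, h₂⟩, h₃⟩
  rw [Submodule.mem_bot, ← (tensorBasis5 b).repr.map_eq_zero_iff]
  ext ⟨g, h, i, j, k⟩
  exact eq_zero_of_parafermionicIdentity (fun g h i j k => (tensorBasis5 b).repr t (g, h, i, j, k))
    (parafermionicIdentity_of_mem_subREE hR h₁) (parafermionicIdentity_of_mem_subERE hR h₂)
    (parafermionicIdentity_of_mem_subEER hR h₃) g h i j k

end Coordinates

theorem parafermionicIdentity_of_mem_parafermionicRelations {D : ℕ} {r}
    (hr : r ∈ parafermionicRelations D) :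
    ParafermionicIdentity fun i j k =>
      (tensorBasis3 (Pi.basisFun ℂ (Fin D))).repr r (i, j, k) := by
  intro i j k
  induction hr using Submodule.span_induction with
  | mem t ht =>
    obtain ⟨x, y, z, rfl⟩ := ht
    simp only [tensorBasis3, map_sub, map_add, Finsupp.sub_apply, Finsupp.add_apply,
      Module.Basis.tensorProduct_repr_tmul_apply, Pi.basisFun_repr, smul_eq_mul]
    ring
  | zero => simp
  | add u v _ _ hu hv =>
    simp only [map_add, Finsupp.add_apply]
    linear_combination hu + hv
  | smul c u _ hu =>
    simp only [map_smul, Finsupp.smul_apply, smul_eq_mul]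
    linear_combination c * hu

theorem parafermionic_dual_degree_five_vanishes_general (D : ℕ) :
    subREE (parafermionicRelations D) ⊓ subERE (parafermionicRelations D) ⊓
        subEER (parafermionicRelations D) = ⊥ :=
  subREE_inf_subERE_inf_subEER_eq_bot fun _ =>
    parafermionicIdentity_of_mem_parafermionicRelations

/-- Inside `(ℂ^D)^{⊗5}` one has `(R_B⊗E⊗E) ∩ (E⊗R_B⊗E) ∩ (E⊗E⊗R_B) = 0`:
the degree-5 component of the dual cubic algebra `B^!` of the parafermionic algebra
vanishes (and hence all components of degree ≥ 5 vanish). -/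
theorem parafermionic_dual_degree_five_vanishes (D : ℕ) (hD : 1 ≤ D) :
    subREE (parafermionicRelations D) ⊓ subERE (parafermionicRelations D) ⊓
        subEER (parafermionicRelations D) = ⊥ :=
  parafermionic_dual_degree_five_vanishes_general D
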